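/- For the polynomial algebra R = k[X₁,…,X_N], the action of a labeled tree T ∈ kLT(𝔇) on s ∈ R defined by T·s = Σ_{μ₁,…,μ_m} R(m)⋯R(1)R(0) — where the non-root nodes of T are labeled with derivations E_i = Σ_{μ_i} r_{iμ_i} ∂/∂X_{μ_i}, and R(i) = ∂_{X_{μ_{j_k}}}⋯∂_{X_{μ_{j_1}}} applied to r_{iμ_i} (or to s when i = 0 is the root), with j₁,…,j_k the children of node i — makes R into a left kLT(𝔇)-module algebra. -/

import Mathlib

/-- An ordered labeled subtree: a node with a label and an ordered list of children. -/
inductive LSub (D : Type) : Type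
  | mk : D → List (LSub D) → LSub D

/-- An ordered rooted tree with unlabeled root and non-root nodes labeled in `D`,
represented by the list of subtrees attached to the root. -/
abbrev LTree (D : Type) := List (LSub D)

mutual
  /-- Number of nodes of a labeled subtree. -/
  def sizeS {D : Type} : LSub D → Nat
    | .mk _ ts => 1 + sizeL ts
  /-- Total number of (labeled) nodes of a forest. -/
  def sizeL {D : Type} : List (LSub D) → Nat
    | [] => 0
    | t :: ts => sizeS t + sizeL ts
end

mutual
  /-- Graft pending subtrees (given by `f`, indexed by the preorder index of nodes)
  onto a subtree whose own preorder index is `i`; attached subtrees are prepended. -/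
  def graftS {D : Type} (f : Nat → List (LSub D)) (i : Nat) : LSub D → LSub D
    | .mk d ts => .mk d (f i ++ graftL f (i + 1) ts)
  def graftL {D : Type} (f : Nat → List (LSub D)) (i : Nat) : List (LSub D) → List (LSub D)
    | [] => []
    | t :: ts => graftS f i t :: graftL f (i + sizeS t) ts
end

/-- Graft pending subtrees onto a tree; the root has preorder index `0`. -/
def graft {D : Type} (f : Nat → List (LSub D)) (t : LTree D) : LTree D :=
  f 0 ++ graftL f 1 t

/-- All lists of length `m` with entries `< n` (choices of attachment nodes). -/
def choices : Nat → Nat → List (List Nat)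
  | 0, _ => [[]]
  | m + 1, n => (List.range n).flatMap fun c => (choices m n).map (c :: ·)

/-- The Grossman–Larson product of two basis trees, as an element of the free module:
the sum over all ways of attaching the root-subtrees of `T1` to nodes of `T2`. -/
noncomputable def mulT (k : Type) [Semiring k] {D : Type} (T1 T2 : LTree D) :
    LTree D →₀ k :=
  ((choices T1.length (1 + sizeL T2)).map fun c =>
    Finsupp.single
      (graft (fun i => (T1.zip c).filterMap fun p => if p.2 = i then some p.1 else none) T2)
      (1 : k)).sum

/-- `v E`: the two-node tree whose single non-root node is labeled `E`. -/
def vT {D : Type} (E : D) : LTree D := [.mk E []]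

/-- `u(E; T₁,…,T_k)`: root has one child labeled `E`, with which the roots of the `Tᵢ`
are identified. -/
def uT {D : Type} (E : D) (Ts : List (LTree D)) : LTree D := [.mk E Ts.flatten]

/-- `t(T₁,…,T_k)`: identify the roots of the `Tᵢ`. -/
def tT {D : Type} (Ts : List (LTree D)) : LTree D := Ts.flatten

/-- All decompositions of an ordered multiset into a sub-multiset and its complement
(used for the coproduct). -/
def splits {α : Type} : List α → List (List α × List α)
  | [] => [([], [])]
  | a :: l => ((splits l).map fun p => (a :: p.1, p.2)) ++ ((splits l).map fun p => (p.1, a :: p.2))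

/-- The labeled node of `T` at position `(i, p)`: the `i`-th root-subtree, then follow
the path `p` of child indices. -/
def subAtL {D : Type} : List (LSub D) → Nat → List Nat → Option (LSub D)
  | [], _, _ => none
  | t :: _, 0, [] => some t
  | .mk _ cs :: _, 0, j :: p => subAtL cs j p
  | _ :: ts, i + 1, p => subAtL ts i p

/-- Replace the node of `T` at position `(i, p)`: relabel it with `G` and replace the
subtree rooted there (its list of children) by `T'`. -/
def replaceAtL {D : Type} (G : D) (T' : List (LSub D)) :
    List (LSub D) → Nat → List Nat → List (LSub D)
  | [], _, _ => []
  | _ :: ts, 0, [] => .mk G T' :: ts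
  | .mk d cs :: ts, 0, j :: p => .mk d (replaceAtL G T' cs j p) :: ts
  | t :: ts, i + 1, p => t :: replaceAtL G T' ts i p

mutual
  /-- The action of a forest (the root-subtrees of a labeled tree) on a polynomial
  `f ∈ k[X₁,…,X_N]`: `T · s = Σ_{μ₁,…,μ_m} R(m) ⋯ R(1) R(0)` where each non-root node
  `i` labeled `E_i = Σ_μ r_{iμ} ∂/∂X_μ` contributes the mixed partial derivative of its
  coefficient `r_{iμᵢ}` with respect to the indices of its children, and the root factor
  is the corresponding mixed partial derivative of `s`. -/
  noncomputable def actP {k : Type} [Field k] {N : ℕ} :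
      List (LSub (Derivation k (MvPolynomial (Fin N) k) (MvPolynomial (Fin N) k))) →
        MvPolynomial (Fin N) k → MvPolynomial (Fin N) k
    | [], f => f
    | c :: cs, f => ∑ μ : Fin N, coeffP c μ * actP cs ((MvPolynomial.pderiv μ) f)
  /-- The coefficient contributed by a non-root node labeled `E` with children `cs`,
  for the summation index `μ`: the children's mixed partials applied to `E(X_μ)`. -/
  noncomputable def coeffP {k : Type} [Field k] {N : ℕ} :
      LSub (Derivation k (MvPolynomial (Fin N) k) (MvPolynomial (Fin N) k)) →
        Fin N → MvPolynomial (Fin N) k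
    | .mk E cs, μ => actP cs (E (MvPolynomial.X μ))
end

/-!
A forest acts as a differential operator: a root subtree labeled `E` with children `cs`
contributes `Σ_μ (cs · E(X_μ)) ∂_μ`. Since each `∂_μ` obeys Leibniz' rule, so does every forest,
its root subtrees being distributed between the two factors; this is the module algebra identity.
For the product, `T₁ · (T₂ · f)` is expanded node by node of `T₂` with this Leibniz rule: every
root subtree of `T₁` lands either on the root factor or on the coefficient of exactly one node of
`T₂`, which is the sum over all graftings defining `mulT`. The order in which grafted subtrees are
listed does not matter because partial derivatives commute.
-/

open MvPolynomial

namespace List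

variable {α β γ M : Type*}

lemma sum_map_finset_sum [AddCommMonoid M] (l : List α) (s : Finset β) (F : α → β → M) :
    (l.map fun x => ∑ μ ∈ s, F x μ).sum = ∑ μ ∈ s, (l.map fun x => F x μ).sum := by
  simpa using Multiset.sum_map_sum (m := (l : Multiset α)) (s := s) (f := F)

lemma sum_map_sum_map_comm [AddCommMonoid M] (l₁ : List α) (l₂ : List β) (F : α → β → M) :
    (l₁.map fun x => (l₂.map fun y => F x y).sum).sum
      = (l₂.map fun y => (l₁.map fun x => F x y).sum).sum := by
  simpa using Multiset.sum_map_sum_map (l₁ : Multiset α) (l₂ : Multiset β) (f := F)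

lemma sum_map_sum_map_finset_sum_mul [NonUnitalNonAssocSemiring M] (l₁ : List α) (l₂ : List β)
    (s : Finset γ) (f : α → γ → M) (g : β → γ → M) :
    (l₁.map fun x => (l₂.map fun y => ∑ μ ∈ s, f x μ * g y μ).sum).sum
      = ∑ μ ∈ s, (l₁.map (f · μ)).sum * (l₂.map (g · μ)).sum := by
  simp only [sum_map_finset_sum, List.sum_map_mul_left, List.sum_map_mul_right]

end List

section Choices

variable {α M : Type*} [AddCommMonoid M]

def choicesFrom (vals : List α) : ℕ → List (List α)
  | 0 => [[]]
  | m + 1 => vals.flatMap fun v => (choicesFrom vals m).map (v :: ·)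

lemma choices_eq_choicesFrom_range (m n : ℕ) : choices m n = choicesFrom (List.range n) m := by
  induction m with
  | zero => rfl
  | succ m ih => simp [choices, choicesFrom, ih]

lemma sum_map_choicesFrom_succ (vals : List α) (m : ℕ) (F : List α → M) :
    ((choicesFrom vals (m + 1)).map F).sum
      = (vals.map fun v => ((choicesFrom vals m).map fun c => F (v :: c)).sum).sum := by
  simp [choicesFrom, List.flatMap, List.sum_flatten, List.map_flatten, Function.comp_def]

lemma mem_of_mem_choicesFrom {vals : List α} {m : ℕ} {c : List α} (hc : c ∈ choicesFrom vals m)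
    {e : α} (he : e ∈ c) : e ∈ vals := by
  induction m generalizing c with
  | zero => simp_all [choicesFrom]
  | succ m ih =>
    obtain ⟨v, hv, c', hc', rfl⟩ : ∃ v ∈ vals, ∃ c' ∈ choicesFrom vals m, v :: c' = c := by
      simpa [choicesFrom] using hc
    rcases List.mem_cons.mp he with rfl | he
    exacts [hv, ih hc' he]

lemma choicesFrom_singleton (v : α) (m : ℕ) : choicesFrom [v] m = [List.replicate m v] := by
  induction m with
  | zero => rfl
  | succ m ih => simp [choicesFrom, ih, List.replicate_succ]

lemma sum_map_choicesFrom_of_perm {vals vals' : List α} (hp : vals.Perm vals') (m : ℕ)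
    (F : List α → M) :
    ((choicesFrom vals m).map F).sum = ((choicesFrom vals' m).map F).sum := by
  induction m generalizing F with
  | zero => rfl
  | succ m ih =>
    simp only [sum_map_choicesFrom_succ, ih]
    exact (hp.map _).sum_eq

end Choices

section Attachments

variable {α : Type} {M : Type*}

def attachments (a : List α) (c : List ℕ) (u : ℕ) : List α :=
  (a.zip c).filterMap fun p => if p.2 = u then some p.1 else none

lemma attachments_cons (p : α) (a : List α) (v : ℕ) (c : List ℕ) (u : ℕ) :
    attachments (p :: a) (v :: c) u = (if v = u then [p] else []) ++ attachments a c u := by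
  by_cases h : v = u <;> simp [attachments, h]

lemma attachments_eq_nil_of_notMem (a : List α) {c : List ℕ} {u : ℕ} (hu : u ∉ c) :
    attachments a c u = [] := by
  simp only [attachments, List.filterMap_eq_nil_iff]
  exact fun p hp => if_neg fun (hpu : p.2 = u) => hu (hpu ▸ (List.of_mem_zip hp).2)

lemma attachments_replicate_length (a : List α) (j : ℕ) :
    attachments a (List.replicate a.length j) j = a := by
  induction a with
  | nil => rfl
  | cons p a ih => simp [List.replicate_succ, attachments_cons, ih]

lemma sum_choicesFrom_append_eq_sum_splits [AddCommMonoid M] {V W : List ℕ}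
    (hVW : ∀ v ∈ V, v ∉ W) (a : List α) (F : (ℕ → List α) → M) :
    ((choicesFrom (V ++ W) a.length).map fun c => F (attachments a c)).sum
      = ((splits a).map fun q => ((choicesFrom V q.1.length).map fun c₁ =>
          ((choicesFrom W q.2.length).map fun c₂ =>
            F fun u => attachments q.1 c₁ u ++ attachments q.2 c₂ u).sum).sum).sum := by
  induction a generalizing F with
  | nil =>
    simp only [List.length_nil, choicesFrom, splits, List.map_cons, List.map_nil, List.sum_cons,
      List.sum_nil, add_zero]
    rfl
  | cons p a ih =>
    let P (v u : ℕ) : List α := if v = u then [p] else []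
    have hprepend (v : ℕ) :
        ((choicesFrom (V ++ W) a.length).map fun c => F (attachments (p :: a) (v :: c))).sum
          = ((splits a).map fun q => ((choicesFrom V q.1.length).map fun c₁ =>
              ((choicesFrom W q.2.length).map fun c₂ =>
                F fun u => P v u ++ (attachments q.1 c₁ u ++ attachments q.2 c₂ u)).sum).sum).sum := by
      simp only [funext (attachments_cons p a v _)]
      exact ih fun A => F fun u => P v u ++ A u
    rw [List.length_cons, sum_map_choicesFrom_succ, List.map_congr_left fun v _ => hprepend v,
      List.map_append, List.sum_append, splits, List.map_append, List.sum_append, List.map_map,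
      List.map_map, List.sum_map_sum_map_comm (l₁ := V), List.sum_map_sum_map_comm (l₁ := W)]
    congr 1
    · refine congrArg _ (List.map_congr_left fun q _ => ?_)
      simp [sum_map_choicesFrom_succ, attachments_cons, P]
    · refine congrArg _ (List.map_congr_left fun q _ => ?_)
      simp only [Function.comp_apply, List.length_cons, sum_map_choicesFrom_succ]
      rw [List.sum_map_sum_map_comm]
      refine congrArg _ (List.map_congr_left fun c₁ hc₁ => ?_)
      refine congrArg _ (List.map_congr_left fun v hv => congrArg _ (List.map_congr_left
        fun c₂ _ => congrArg F (funext fun u => ?_)))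
      rw [attachments_cons]
      -- a subtree grafted at `v ∈ W` may be moved in front of those grafted at nodes in `V`
      by_cases h : v = u
      · subst h
        rw [attachments_eq_nil_of_notMem _ fun hm => hVW v (mem_of_mem_choicesFrom hc₁ hm) hv]
        simp [P]
      · simp [P, h]

end Attachments

section Graft

variable {D : Type}

lemma sizeS_mk (d : D) (ts : List (LSub D)) : sizeS (.mk d ts) = 1 + sizeL ts := rfl

lemma sizeL_cons (s : LSub D) (ss : List (LSub D)) : sizeL (s :: ss) = sizeS s + sizeL ss := rfl

lemma graftS_mk (g : ℕ → List (LSub D)) (i : ℕ) (d : D) (ts : List (LSub D)) :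
    graftS g i (.mk d ts) = .mk d (g i ++ graftL g (i + 1) ts) := rfl

lemma graftL_cons (g : ℕ → List (LSub D)) (i : ℕ) (s : LSub D) (ss : List (LSub D)) :
    graftL g i (s :: ss) = graftS g i s :: graftL g (i + sizeS s) ss := rfl

mutual

theorem graftS_congr {g g' : ℕ → List (LSub D)} :
    ∀ (i : ℕ) (s : LSub D), (∀ v, i ≤ v → v < i + sizeS s → g v = g' v) →
      graftS g i s = graftS g' i s
  | i, .mk d ts, h => by
    rw [sizeS_mk] at h
    rw [graftS_mk, graftS_mk, h i le_rfl (by omega),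
      graftL_congr (i + 1) ts fun v hv₁ hv₂ => h v (by omega) (by omega)]

theorem graftL_congr {g g' : ℕ → List (LSub D)} :
    ∀ (i : ℕ) (ts : List (LSub D)), (∀ v, i ≤ v → v < i + sizeL ts → g v = g' v) →
      graftL g i ts = graftL g' i ts
  | _, [], _ => rfl
  | i, s :: ss, h => by
    rw [sizeL_cons] at h
    rw [graftL_cons, graftL_cons, graftS_congr i s fun v hv₁ hv₂ => h v hv₁ (by omega),
      graftL_congr (i + sizeS s) ss fun v hv₁ hv₂ => h v (by omega) (by omega)]

end

end Graft

lemma MvPolynomial.pderiv_pderiv_comm {σ R : Type*} [CommSemiring R] (i j : σ)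
    (f : MvPolynomial σ R) : pderiv i (pderiv j f) = pderiv j (pderiv i f) := by
  induction f using MvPolynomial.induction_on with
  | C a => simp
  | add f g hf hg => simp [hf, hg]
  | mul_X f l hf =>
    have hX (α β : σ) : pderiv α (pderiv β (X l : MvPolynomial σ R)) = 0 := by
      by_cases h : l = β
      · subst h; simp
      · simp [pderiv_X_of_ne h]
    simp only [pderiv_mul, map_add, hf, hX]
    ring

section Action

variable {k : Type} [Field k] {N : ℕ}

local notation "𝓡" => MvPolynomial (Fin N) k
local notation "𝔇" => Derivation k 𝓡 𝓡

@[simp] lemma actP_nil (f : 𝓡) : actP ([] : List (LSub 𝔇)) f = f := rfl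

lemma actP_cons (c : LSub 𝔇) (cs : List (LSub 𝔇)) (f : 𝓡) :
    actP (c :: cs) f = ∑ μ, coeffP c μ * actP cs (pderiv μ f) := rfl

lemma coeffP_mk (E : 𝔇) (ts : List (LSub 𝔇)) (μ : Fin N) :
    coeffP (.mk E ts) μ = actP ts (E (X μ)) := rfl

lemma actP_add (T : List (LSub 𝔇)) (f g : 𝓡) : actP T (f + g) = actP T f + actP T g := by
  induction T generalizing f g with
  | nil => rfl
  | cons c cs ih => simp [actP_cons, ih, mul_add, Finset.sum_add_distrib]

lemma actP_smul (T : List (LSub 𝔇)) (a : k) (f : 𝓡) : actP T (a • f) = a • actP T f := by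
  induction T generalizing f with
  | nil => rfl
  | cons c cs ih => simp [actP_cons, ih, Finset.smul_sum]

noncomputable def actPLinearMap (T : List (LSub 𝔇)) : 𝓡 →ₗ[k] 𝓡 where
  toFun := actP T
  map_add' := actP_add T
  map_smul' := actP_smul T

lemma actP_sum {ι : Type*} (T : List (LSub 𝔇)) (s : Finset ι) (F : ι → 𝓡) :
    actP T (∑ μ ∈ s, F μ) = ∑ μ ∈ s, actP T (F μ) :=
  map_sum (actPLinearMap T) F s

lemma actP_mul (T : List (LSub 𝔇)) (f g : 𝓡) :
    actP T (f * g) = ((splits T).map fun q => actP q.1 f * actP q.2 g).sum := by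
  induction T generalizing f g with
  | nil => simp [splits]
  | cons c cs ih =>
    have hleft (u v : 𝓡) : ((splits cs).map fun q => actP (c :: q.1) u * actP q.2 v).sum
        = ∑ μ, coeffP c μ * actP cs (pderiv μ u * v) := by
      simp only [actP_cons, Finset.sum_mul, List.sum_map_finset_sum, mul_assoc,
        List.sum_map_mul_left, ih]
    have hright (u v : 𝓡) : ((splits cs).map fun q => actP q.1 u * actP (c :: q.2) v).sum
        = ∑ μ, coeffP c μ * actP cs (u * pderiv μ v) := by
      simp only [actP_cons, Finset.mul_sum, List.sum_map_finset_sum, mul_left_comm _ (coeffP c _),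
        List.sum_map_mul_left, ih]
    simp only [splits, List.map_append, List.sum_append, List.map_map, Function.comp_def]
    rw [hleft, hright, actP_cons]
    simp only [pderiv_mul, actP_add, mul_add, Finset.sum_add_distrib]

lemma actP_append_cons (b : List (LSub 𝔇)) (s : LSub 𝔇) (ss : List (LSub 𝔇)) (f : 𝓡) :
    actP (b ++ s :: ss) f = ∑ μ, coeffP s μ * actP (b ++ ss) (pderiv μ f) := by
  induction b generalizing f with
  | nil => rfl
  | cons c b ih =>
    simp only [List.cons_append, actP_cons, ih, Finset.mul_sum]
    rw [Finset.sum_comm]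
    refine Finset.sum_congr rfl fun μ _ => Finset.sum_congr rfl fun ν _ => ?_
    rw [pderiv_pderiv_comm]
    ring

/-- All graftings of the root subtrees of `a` onto the nodes of `ts`, numbered in preorder from
`i`, or onto an extra root numbered `j` whose grafts are placed in front of `ts`. -/
noncomputable def attachAction (a : List (LSub 𝔇)) (j i : ℕ) (ts : List (LSub 𝔇)) (f : 𝓡) : 𝓡 :=
  ((choicesFrom (j :: List.range' i (sizeL ts)) a.length).map fun c =>
    actP (attachments a c j ++ graftL (attachments a c) i ts) f).sum

lemma attachAction_nil (a : List (LSub 𝔇)) (j i : ℕ) (f : 𝓡) :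
    attachAction a j i [] f = actP a f := by
  simp [attachAction, sizeL, graftL, choicesFrom_singleton, attachments_replicate_length]

lemma actP_append_graftL_cons {A₁ A₂ : ℕ → List (LSub 𝔇)} {j i : ℕ} (hj : j < i) (E : 𝔇)
    (ts ss : List (LSub 𝔇))
    (hA₁ : ∀ u, (u < i ∨ i + sizeS (.mk E ts) ≤ u) → A₁ u = [])
    (hA₂ : ∀ u, i ≤ u → u < i + sizeS (.mk E ts) → A₂ u = []) (f : 𝓡) :
    actP ((A₁ j ++ A₂ j) ++ graftL (fun u => A₁ u ++ A₂ u) i (.mk E ts :: ss)) f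
      = ∑ μ, actP (A₁ i ++ graftL A₁ (i + 1) ts) (E (X μ)) *
          actP (A₂ j ++ graftL A₂ (i + sizeS (.mk E ts)) ss) (pderiv μ f) := by
  rw [sizeS_mk] at hA₁ hA₂ ⊢
  have hfirst : graftS (fun u => A₁ u ++ A₂ u) i (.mk E ts) = graftS A₁ i (.mk E ts) :=
    graftS_congr i _ fun v hv₁ hv₂ => by rw [hA₂ v hv₁ hv₂, List.append_nil]
  have hrest : graftL (fun u => A₁ u ++ A₂ u) (i + (1 + sizeL ts)) ss
      = graftL A₂ (i + (1 + sizeL ts)) ss :=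
    graftL_congr _ ss fun v hv₁ _ => by rw [hA₁ v (.inr hv₁), List.nil_append]
  rw [hA₁ j (.inl hj), List.nil_append, graftL_cons, hfirst, sizeS_mk, hrest, actP_append_cons,
    graftS_mk]
  simp only [coeffP_mk]

lemma attachAction_cons (a : List (LSub 𝔇)) {j i : ℕ} (hj : j < i) (E : 𝔇)
    (ts ss : List (LSub 𝔇)) (f : 𝓡) :
    attachAction a j i (.mk E ts :: ss) f
      = ((splits a).map fun q => ∑ μ, attachAction q.1 i (i + 1) ts (E (X μ)) *
          attachAction q.2 j (i + sizeS (.mk E ts)) ss (pderiv μ f)).sum := by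
  have hperm : (j :: List.range' i (sizeL (.mk E ts :: ss))).Perm
      (List.range' i (sizeS (.mk E ts)) ++ j :: List.range' (i + sizeS (.mk E ts)) (sizeL ss)) := by
    rw [sizeL_cons, ← List.range'_append, one_mul]
    exact List.perm_middle.symm
  have hdisj : ∀ v ∈ List.range' i (sizeS (.mk E ts)),
      v ∉ j :: List.range' (i + sizeS (.mk E ts)) (sizeL ss) := by
    simp only [List.mem_range'_1, List.mem_cons, not_or]
    omega
  have hblock : List.range' i (sizeS (.mk E ts)) = i :: List.range' (i + 1) (sizeL ts) := by
    rw [sizeS_mk, add_comm, List.range'_succ]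
  simp only [attachAction]
  rw [sum_map_choicesFrom_of_perm hperm, sum_choicesFrom_append_eq_sum_splits hdisj a
    fun A => actP (A j ++ graftL A i (.mk E ts :: ss)) f]
  refine congrArg _ (List.map_congr_left fun q _ => ?_)
  rw [← hblock, ← List.sum_map_sum_map_finset_sum_mul]
  refine congrArg _ (List.map_congr_left fun c₁ hc₁ => congrArg _
    (List.map_congr_left fun c₂ hc₂ => actP_append_graftL_cons hj E ts ss (fun u hu => ?_)
      (fun u hu₁ hu₂ => ?_) f))
  · refine attachments_eq_nil_of_notMem _ fun hm => ?_
    have := List.mem_range'_1.mp (mem_of_mem_choicesFrom hc₁ hm)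
    omega
  · refine attachments_eq_nil_of_notMem _ fun hm => ?_
    have := List.mem_cons.mp (mem_of_mem_choicesFrom hc₂ hm)
    simp only [List.mem_range'_1] at this
    omega

theorem attachAction_eq (a : List (LSub 𝔇)) {j i : ℕ} (hj : j < i) (ts : List (LSub 𝔇))
    (f : 𝓡) : attachAction a j i ts f = actP a (actP ts f) :=
  match ts with
  | [] => attachAction_nil a j i f
  | .mk E ts :: ss => by
    have hsub : ∀ b g, attachAction b i (i + 1) ts g = actP b (actP ts g) :=
      fun b g => attachAction_eq b i.lt_add_one ts g
    have hrest : ∀ b g, attachAction b j (i + sizeS (.mk E ts)) ss g = actP b (actP ss g) :=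
      fun b g => attachAction_eq b (hj.trans_le (Nat.le_add_right _ _)) ss g
    simp only [attachAction_cons a hj, hsub, hrest, actP_cons, coeffP_mk, actP_sum, actP_mul]
    exact List.sum_map_finset_sum _ _ _
termination_by sizeL ts
decreasing_by all_goals simp only [sizeL_cons, sizeS_mk]; omega

lemma sum_mulT_smul_actP (T₁ T₂ : List (LSub 𝔇)) (f : 𝓡) :
    ((mulT k T₁ T₂).sum fun T c => c • actP T f) = actP T₁ (actP T₂ f) := by
  have hrange : List.range (1 + sizeL T₂) = 0 :: List.range' 1 (sizeL T₂) := by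
    rw [List.range_eq_range', add_comm, List.range'_succ]
  rw [← Finsupp.linearCombination_apply, mulT, map_list_sum, List.map_map,
    choices_eq_choicesFrom_range, hrange, ← attachAction_eq T₁ one_pos T₂ f]
  simp only [Function.comp_def, Finsupp.linearCombination_single, one_smul]
  rfl

end Action

/-- **Proposition.** For `R = k[X₁,…,X_N]` the action `actP` of labeled trees makes `R`
into a left `kLT(𝔇)`-module algebra: the one-node tree acts as the identity, the action
of each tree is `k`-linear, it intertwines the tree-attachment product with composition,
and satisfies the module algebra condition with respect to the splitting coproduct. -/
theorem polynomial_tree_action_is_module_algebra (k : Type) [Field k] [CharZero k] (N : ℕ) :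
    (∀ f : MvPolynomial (Fin N) k, actP [] f = f) ∧
    (∀ (T : LTree (Derivation k (MvPolynomial (Fin N) k) (MvPolynomial (Fin N) k)))
        (a : k) (f g : MvPolynomial (Fin N) k),
      actP T (a • f + g) = a • actP T f + actP T g) ∧
    (∀ (T₁ T₂ : LTree (Derivation k (MvPolynomial (Fin N) k) (MvPolynomial (Fin N) k)))
        (f : MvPolynomial (Fin N) k),
      ((mulT k T₁ T₂).sum fun T c => c • actP T f) = actP T₁ (actP T₂ f)) ∧
    (∀ (T : LTree (Derivation k (MvPolynomial (Fin N) k) (MvPolynomial (Fin N) k)))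
        (f g : MvPolynomial (Fin N) k),
      actP T (f * g) = ((splits T).map fun q => actP q.1 f * actP q.2 g).sum) :=
  ⟨actP_nil, fun T a f g => by rw [actP_add, actP_smul], sum_mulT_smul_actP, actP_mul⟩
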